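/- arXiv:1602.01631 — 2 statements merged into one kernel-verified Lean document; each statement's English description precedes it below -/
import Mathlib

section
/- Let P(t) = a_n t^n + ... + a_0 be a polynomial with roots α_1,...,α_n, and x ∈ ℝ with |x-α_1| = min_j |x-α_j|. Then |x-α_1| ≤ 2^{n-1} |P(x)|/|P'(α_1)|, provided P'(α_1) ≠ 0. -/
/-!
Write `P = a ∏ⱼ (X - αⱼ)` and let `αᵢ` be a root closest to `x`. Then
`P(x) = a (x - αᵢ) ∏_{j ≠ i} (x - αⱼ)` and `P'(αᵢ) = a ∏_{j ≠ i} (αᵢ - αⱼ)`, and each factor of the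
second product is at most twice the matching factor of the first, since
`|αᵢ - αⱼ| ≤ |αᵢ - x| + |x - αⱼ| ≤ 2 |x - αⱼ|`.
-/

open Polynomial Finset Lagrange

theorem norm_sub_le_two_mul_of_norm_sub_le {E : Type*} [SeminormedAddCommGroup E] {x y z : E}
    (h : ‖x - y‖ ≤ ‖x - z‖) : ‖y - z‖ ≤ 2 * ‖x - z‖ :=
  calc ‖y - z‖ ≤ ‖y - x‖ + ‖x - z‖ := norm_sub_le_norm_sub_add_norm_sub y x z
    _ = ‖x - y‖ + ‖x - z‖ := by rw [norm_sub_rev]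
    _ ≤ 2 * ‖x - z‖ := by linarith

theorem prod_norm_sub_le_two_pow_mul_prod_of_closest {ι E : Type*} [SeminormedAddCommGroup E]
    {s : Finset ι} {α : ι → E} {x y : E} (hmin : ∀ j ∈ s, ‖x - y‖ ≤ ‖x - α j‖) :
    ∏ j ∈ s, ‖y - α j‖ ≤ 2 ^ #s * ∏ j ∈ s, ‖x - α j‖ := by
  rw [← prod_const, ← prod_mul_distrib]
  exact prod_le_prod (fun _ _ ↦ norm_nonneg _)
    fun j hj ↦ norm_sub_le_two_mul_of_norm_sub_le (hmin j hj)

theorem norm_sub_mul_norm_eval_derivative_le_of_closest_node {ι 𝕜 : Type*} [DecidableEq ι]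
    [NormedField 𝕜] (a : 𝕜) {s : Finset ι} {α : ι → 𝕜} {i : ι} (hi : i ∈ s) (x : 𝕜)
    (hmin : ∀ j ∈ s, ‖x - α i‖ ≤ ‖x - α j‖) :
    ‖x - α i‖ * ‖(derivative (C a * nodal s α)).eval (α i)‖ ≤
      2 ^ (#s - 1) * ‖(C a * nodal s α).eval x‖ := by
  have hderiv : (derivative (C a * nodal s α)).eval (α i) = a * ∏ j ∈ s.erase i, (α i - α j) := by
    rw [derivative_mul, derivative_C, zero_mul, zero_add, eval_mul, eval_C,
      eval_nodal_derivative_eval_node_eq hi, eval_nodal]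
  have heval : (C a * nodal s α).eval x = a * ((x - α i) * ∏ j ∈ s.erase i, (x - α j)) := by
    rw [eval_mul, eval_C, eval_nodal, mul_prod_erase s (fun j ↦ x - α j) hi]
  have hprod := prod_norm_sub_le_two_pow_mul_prod_of_closest
    (s := s.erase i) (α := α) (y := α i) fun j hj ↦ hmin j (mem_of_mem_erase hj)
  rw [card_erase_of_mem hi] at hprod
  simp only [hderiv, heval, norm_mul, norm_prod]
  calc ‖x - α i‖ * (‖a‖ * ∏ j ∈ s.erase i, ‖α i - α j‖)
      ≤ ‖x - α i‖ * (‖a‖ * (2 ^ (#s - 1) * ∏ j ∈ s.erase i, ‖x - α j‖)) := by gcongr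
    _ = 2 ^ (#s - 1) * (‖a‖ * (‖x - α i‖ * ∏ j ∈ s.erase i, ‖x - α j‖)) := by ring

theorem closest_root_bound_deriv_at_root_general
    (n : ℕ) (hn : 1 ≤ n) (a : ℂ) (α : Fin n → ℂ)
    (P : Polynomial ℂ)
    (hP : P = Polynomial.C a * ∏ j : Fin n, (Polynomial.X - Polynomial.C (α j)))
    (x : ℝ)
    (hmin : ∀ j : Fin n, ‖(x : ℂ) - α ⟨0, hn⟩‖ ≤ ‖(x : ℂ) - α j‖)
    (hP'α : P.derivative.eval (α ⟨0, hn⟩) ≠ 0) :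
    ‖(x : ℂ) - α ⟨0, hn⟩‖ ≤
      2 ^ (n - 1) * ‖P.eval (x : ℂ)‖ /
        ‖P.derivative.eval (α ⟨0, hn⟩)‖ := by
  rw [le_div_iff₀ (norm_pos_iff.mpr hP'α)]
  rw [← nodal_eq] at hP
  subst hP
  simpa using norm_sub_mul_norm_eval_derivative_le_of_closest_node a (mem_univ _) (x : ℂ)
    fun j _ ↦ hmin j

theorem closest_root_bound_deriv_at_root
    (n : ℕ) (hn : 1 ≤ n) (a : ℂ) (ha : a ≠ 0) (α : Fin n → ℂ)
    (P : Polynomial ℂ)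
    (hP : P = Polynomial.C a * ∏ j : Fin n, (Polynomial.X - Polynomial.C (α j)))
    (x : ℝ)
    (hmin : ∀ j : Fin n, ‖(x : ℂ) - α ⟨0, hn⟩‖ ≤ ‖(x : ℂ) - α j‖)
    (hP'α : P.derivative.eval (α ⟨0, hn⟩) ≠ 0) :
    ‖(x : ℂ) - α ⟨0, hn⟩‖ ≤
      2 ^ (n - 1) * ‖P.eval (x : ℂ)‖ /
        ‖P.derivative.eval (α ⟨0, hn⟩)‖ :=
  closest_root_bound_deriv_at_root_general n hn a α P hP x hmin hP'α
end

section
/- Let Q > 1 and let n ≥ 2. For any real numbers x_1, x_2 in a bounded interval and any v_1, v_2 > 0 with v_1 + v_2 = n - 1, there exists a nonzero integer polynomial P of degree at most n and height at most Q such that |P(x_i)| ≤ h_n · Q^{-v_i} for i = 1, 2, where h_n > 0 is a constant depending only on n and on the bound for |x_1|, |x_2|. -/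
open Polynomial Finset

private lemma floor_box {δ u v : ℝ} (hδ : 0 < δ) (h : ⌊u / δ⌋ = ⌊v / δ⌋) :
    |u - v| < δ := by
  have a1 := Int.floor_le (u / δ)
  have a2 := Int.lt_floor_add_one (u / δ)
  have b1 := Int.floor_le (v / δ)
  have b2 := Int.lt_floor_add_one (v / δ)
  rw [h] at a1 a2
  have h1 : |u / δ - v / δ| < 1 := by
    rw [abs_sub_lt_iff]; constructor <;> linarith
  have h2 : u - v = (u / δ - v / δ) * δ := by field_simp
  rw [h2, abs_mul, abs_of_pos hδ]
  calc |u / δ - v / δ| * δ < 1 * δ := mul_lt_mul_of_pos_right h1 hδ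
    _ = δ := one_mul δ

set_option maxHeartbeats 1600000 in
theorem dirichlet_simultaneous_polynomial_approximation
    (n : ℕ) (hn : 2 ≤ n) (M : ℝ) (hM : 0 < M) :
    ∃ h : ℝ, 0 < h ∧
      ∀ Q : ℝ, 1 < Q →
        ∀ x₁ x₂ : ℝ, |x₁| ≤ M → |x₂| ≤ M →
          ∀ v₁ v₂ : ℝ, 0 < v₁ → 0 < v₂ → v₁ + v₂ = (n : ℝ) - 1 →
            ∃ P : Polynomial ℤ, P ≠ 0 ∧ P.natDegree ≤ n ∧
              (∀ i : ℕ, (|P.coeff i| : ℝ) ≤ Q) ∧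
              |Polynomial.eval x₁ (P.map (Int.castRingHom ℝ))| ≤ h * Q ^ (-v₁) ∧
              |Polynomial.eval x₂ (P.map (Int.castRingHom ℝ))| ≤ h * Q ^ (-v₂) := by
  set K : ℝ := (max 1 M) ^ n with hKdef
  have hK1 : 1 ≤ K := one_le_pow₀ (le_max_left 1 M)
  set Cc : ℝ := (n + 1) * K with hCcdef
  have hCc0 : 0 < Cc := by positivity
  set h : ℝ := 2 ^ n + 4 * Cc with hhdef
  have hh0 : 0 < h := by positivity
  have h4Cc : 4 * Cc ≤ h := by
    have : (0:ℝ) < 2 ^ n := by positivity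
    linarith
  have h2n : (2:ℝ) ^ n ≤ h := by linarith
  refine ⟨h, hh0, ?_⟩
  intro Q hQ x₁ x₂ hx₁ hx₂ v₁ v₂ hv₁ hv₂ hv
  have hQ0 : (0:ℝ) < Q := by linarith
  have hQ1 : (1:ℝ) ≤ Q := hQ.le
  -- generic "1 works" bound for small Q
  by_cases hQ2 : Q < 2
  · -- small Q : use P = 1
    have key : ∀ v : ℝ, 0 < v → v ≤ (n:ℝ) - 1 → 1 ≤ h * Q ^ (-v) := by
      intro v hv0 hvle
      have hQv0 : (0:ℝ) < Q ^ v := Real.rpow_pos_of_pos hQ0 v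
      have h1 : Q ^ v ≤ Q ^ ((n:ℝ) - 1) := Real.rpow_le_rpow_of_exponent_le hQ1 hvle
      have h2 : Q ^ ((n:ℝ) - 1) ≤ (2:ℝ) ^ ((n:ℝ) - 1) :=
        Real.rpow_le_rpow hQ0.le hQ2.le (by
          have : (2:ℝ) ≤ (n:ℝ) := by exact_mod_cast hn
          linarith)
      have h3 : (2:ℝ) ^ ((n:ℝ) - 1) ≤ (2:ℝ) ^ ((n:ℝ)) :=
        Real.rpow_le_rpow_of_exponent_le one_le_two (by linarith)
      have h4 : (2:ℝ) ^ ((n:ℝ)) = (2:ℝ) ^ n := Real.rpow_natCast 2 n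
      have hQvh : Q ^ v ≤ h := by rw [h4] at h3; linarith
      rw [Real.rpow_neg hQ0.le, ← div_eq_mul_inv, le_div_iff₀ hQv0, one_mul]
      exact hQvh
    refine ⟨1, one_ne_zero, by simp, ?_, ?_, ?_⟩
    · intro i
      rcases Nat.eq_zero_or_pos i with rfl | hi
      · simp; linarith
      · rw [Polynomial.coeff_one, if_neg (by omega)]; simp; linarith
    · rw [Polynomial.map_one, Polynomial.eval_one, abs_one]
      exact key v₁ hv₁ (by linarith)
    · rw [Polynomial.map_one, Polynomial.eval_one, abs_one]
      exact key v₂ hv₂ (by linarith)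
  push_neg at hQ2
  -- main case: Q ≥ 2, pigeonhole
  set N : ℕ := ⌊Q⌋.toNat with hNdef
  have hfl0 : (0:ℤ) ≤ ⌊Q⌋ := Int.floor_nonneg.mpr hQ0.le
  have hNcast : ((N:ℤ):ℝ) = ((⌊Q⌋ : ℤ) : ℝ) := by rw [hNdef, Int.toNat_of_nonneg hfl0]
  have hNQ : (N : ℝ) ≤ Q := by
    rw [show ((N:ℕ):ℝ) = ((N:ℤ):ℝ) from by push_cast; ring, hNcast]
    exact Int.floor_le Q
  have hQN : Q < (N : ℝ) + 1 := by
    rw [show ((N:ℕ):ℝ) = ((N:ℤ):ℝ) from by push_cast; ring, hNcast]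
    exact Int.lt_floor_add_one Q
  set δ₁ : ℝ := h * Q ^ (-v₁) with hδ₁def
  set δ₂ : ℝ := h * Q ^ (-v₂) with hδ₂def
  have hδ₁0 : 0 < δ₁ := mul_pos hh0 (Real.rpow_pos_of_pos hQ0 _)
  have hδ₂0 : 0 < δ₂ := mul_pos hh0 (Real.rpow_pos_of_pos hQ0 _)
  set S : (Fin (n+1) → Fin (N+1)) → ℝ → ℝ :=
    fun a x => ∑ i : Fin (n+1), ((a i : ℕ) : ℝ) * x ^ (i : ℕ) with hSdef
  have hSb : ∀ (a : Fin (n+1) → Fin (N+1)) (x : ℝ), |x| ≤ M → |S a x| ≤ Cc * Q := by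
    intro a x hx
    have step : ∀ i : Fin (n+1), |((a i : ℕ) : ℝ) * x ^ (i : ℕ)| ≤ (N:ℝ) * K := by
      intro i
      rw [abs_mul]
      apply mul_le_mul _ _ (abs_nonneg _) (Nat.cast_nonneg N)
      · rw [abs_of_nonneg (Nat.cast_nonneg _)]
        exact_mod_cast Nat.cast_le.mpr (Fin.is_le (a i))
      · rw [abs_pow]
        calc |x| ^ (i:ℕ) ≤ (max 1 M) ^ (i:ℕ) :=
              pow_le_pow_left₀ (abs_nonneg x) (hx.trans (le_max_right 1 M)) _
          _ ≤ (max 1 M) ^ n := pow_le_pow_right₀ (le_max_left 1 M) (Nat.lt_succ_iff.mp i.isLt)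
    calc |S a x| ≤ ∑ i : Fin (n+1), |((a i : ℕ) : ℝ) * x ^ (i : ℕ)| :=
          Finset.abs_sum_le_sum_abs _ _
      _ ≤ ∑ _i : Fin (n+1), (N:ℝ) * K := Finset.sum_le_sum (fun i _ => step i)
      _ = ((n:ℝ)+1) * ((N:ℝ) * K) := by
          rw [Finset.sum_const, Finset.card_univ, Fintype.card_fin]; push_cast; ring
      _ ≤ Cc * Q := by
          rw [hCcdef]
          have hN0 : (0:ℝ) ≤ N := Nat.cast_nonneg N
          have hn1 : (0:ℝ) < (n:ℝ) + 1 := by positivity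
          nlinarith
  set f : (Fin (n+1) → Fin (N+1)) → ℤ × ℤ :=
    fun a => (⌊(S a x₁ + Cc * Q) / δ₁⌋, ⌊(S a x₂ + Cc * Q) / δ₂⌋) with hfdef
  set m₁ : ℤ := ⌊2 * Cc * Q / δ₁⌋ with hm₁def
  set m₂ : ℤ := ⌊2 * Cc * Q / δ₂⌋ with hm₂def
  have hm₁0 : 0 ≤ m₁ := Int.floor_nonneg.mpr (div_nonneg (by positivity) hδ₁0.le)
  have hm₂0 : 0 ≤ m₂ := Int.floor_nonneg.mpr (div_nonneg (by positivity) hδ₂0.le)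
  have hmaps : ∀ a ∈ (Finset.univ : Finset (Fin (n+1) → Fin (N+1))),
      f a ∈ Finset.Icc (0:ℤ) m₁ ×ˢ Finset.Icc (0:ℤ) m₂ := by
    intro a _
    have comp : ∀ (x : ℝ) (δ : ℝ), 0 < δ → |x| ≤ M →
        (0 ≤ ⌊(S a x + Cc * Q) / δ⌋ ∧ ⌊(S a x + Cc * Q) / δ⌋ ≤ ⌊2 * Cc * Q / δ⌋) := by
      intro x δ hδ hx
      have hb := hSb a x hx
      have h1 : 0 ≤ S a x + Cc * Q := by
        have := neg_abs_le (S a x); linarith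
      have h2 : S a x + Cc * Q ≤ 2 * Cc * Q := by
        have := le_abs_self (S a x); linarith
      exact ⟨Int.floor_nonneg.mpr (div_nonneg h1 hδ.le),
        Int.floor_le_floor (by gcongr)⟩
    rw [Finset.mem_product, Finset.mem_Icc, Finset.mem_Icc]
    exact ⟨comp x₁ δ₁ hδ₁0 hx₁, comp x₂ δ₂ hδ₂0 hx₂⟩
  -- cardinality comparison
  have hQv₁ : (1:ℝ) ≤ Q ^ v₁ := by
    have := Real.rpow_le_rpow_of_exponent_le hQ1 hv₁.le
    rwa [Real.rpow_zero] at this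
  have hQv₂ : (1:ℝ) ≤ Q ^ v₂ := by
    have := Real.rpow_le_rpow_of_exponent_le hQ1 hv₂.le
    rwa [Real.rpow_zero] at this
  have factor : ∀ v : ℝ, 0 < v → (1:ℝ) ≤ Q ^ v →
      2 * Cc * Q / (h * Q ^ (-v)) + 1 ≤ Q * Q ^ v := by
    intro v hv0 hQv
    have hQv0 : (0:ℝ) < Q ^ v := Real.rpow_pos_of_pos hQ0 v
    have e : h * Q ^ (-v) = h / Q ^ v := by
      rw [Real.rpow_neg hQ0.le, div_eq_mul_inv]
    rw [e, div_div_eq_mul_div]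
    have key : 2 * Cc * Q * Q ^ v / h ≤ Q * Q ^ v / 2 := by
      rw [div_le_div_iff₀ hh0 two_pos]
      nlinarith [mul_nonneg hQ0.le hQv0.le]
    have hQQv : 2 ≤ Q * Q ^ v := by nlinarith
    linarith
  have hm₁R : (m₁ : ℝ) + 1 ≤ Q * Q ^ v₁ := by
    have := Int.floor_le (2 * Cc * Q / δ₁)
    have := factor v₁ hv₁ hQv₁
    rw [← hδ₁def] at this
    linarith [Int.floor_le (2 * Cc * Q / δ₁)]
  have hm₂R : (m₂ : ℝ) + 1 ≤ Q * Q ^ v₂ := by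
    have := factor v₂ hv₂ hQv₂
    rw [← hδ₂def] at this
    linarith [Int.floor_le (2 * Cc * Q / δ₂)]
  have hprodR : ((m₁:ℝ) + 1) * ((m₂:ℝ) + 1) < ((N:ℝ) + 1) ^ (n+1) := by
    have e1 : Q * Q ^ v₁ * (Q * Q ^ v₂) = Q ^ ((n:ℕ)+1 : ℕ) := by
      rw [show Q * Q ^ v₁ * (Q * Q ^ v₂) = Q ^ v₁ * Q ^ v₂ * (Q * Q) from by ring,
        ← Real.rpow_add hQ0, hv, ← Real.rpow_natCast Q ((n:ℕ)+1),
        show Q * Q = Q ^ (2:ℝ) from by rw [show (2:ℝ) = ((2:ℕ):ℝ) from by norm_num, Real.rpow_natCast]; ring,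
        ← Real.rpow_add hQ0]
      push_cast
      ring_nf
    have pos1 : (0:ℝ) ≤ (m₁:ℝ) + 1 := by
      have : (0:ℝ) ≤ (m₁:ℝ) := by exact_mod_cast hm₁0
      linarith
    have pos2 : (0:ℝ) ≤ (m₂:ℝ) + 1 := by
      have : (0:ℝ) ≤ (m₂:ℝ) := by exact_mod_cast hm₂0
      linarith
    have hQpow : Q ^ (n+1) < ((N:ℝ) + 1) ^ (n+1) :=
      pow_lt_pow_left₀ hQN hQ0.le (by omega)
    calc ((m₁:ℝ) + 1) * ((m₂:ℝ) + 1) ≤ (Q * Q ^ v₁) * (Q * Q ^ v₂) := by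
          apply mul_le_mul hm₁R hm₂R pos2 (by nlinarith [Real.rpow_pos_of_pos hQ0 v₁])
      _ = Q ^ (n+1) := e1
      _ < ((N:ℝ) + 1) ^ (n+1) := hQpow
  have hcard : (Finset.Icc (0:ℤ) m₁ ×ˢ Finset.Icc (0:ℤ) m₂).card <
      (Finset.univ : Finset (Fin (n+1) → Fin (N+1))).card := by
    have ecard : ∀ m : ℤ, 0 ≤ m → (((m+1-0).toNat : ℕ) : ℝ) = (m:ℝ)+1 := by
      intro m hm
      rw [← Int.cast_natCast, Int.toNat_of_nonneg (by linarith)]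
      push_cast; ring
    have lhs : (((Finset.Icc (0:ℤ) m₁ ×ˢ Finset.Icc (0:ℤ) m₂).card : ℕ) : ℝ)
        = ((m₁:ℝ)+1)*((m₂:ℝ)+1) := by
      rw [Finset.card_product, Int.card_Icc, Int.card_Icc, Nat.cast_mul,
        ecard m₁ hm₁0, ecard m₂ hm₂0]
    have rhs : (((Finset.univ : Finset (Fin (n+1) → Fin (N+1))).card : ℕ) : ℝ)
        = ((N:ℝ)+1)^(n+1) := by
      rw [Finset.card_univ]
      simp [Fintype.card_fun]
    have : (((Finset.Icc (0:ℤ) m₁ ×ˢ Finset.Icc (0:ℤ) m₂).card : ℕ) : ℝ)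
        < (((Finset.univ : Finset (Fin (n+1) → Fin (N+1))).card : ℕ) : ℝ) := by
      rw [lhs, rhs]; exact hprodR
    exact_mod_cast this
  obtain ⟨a, -, b, -, hab, hfab⟩ :=
    Finset.exists_ne_map_eq_of_card_lt_of_maps_to hcard hmaps
  -- the polynomial
  set P : Polynomial ℤ :=
    ∑ i : Fin (n+1), Polynomial.monomial (i:ℕ) (((a i : ℕ) : ℤ) - ((b i : ℕ) : ℤ)) with hPdef
  have hcoeff : ∀ j : Fin (n+1), P.coeff (j:ℕ) = ((a j : ℕ) : ℤ) - ((b j : ℕ) : ℤ) := by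
    intro j
    rw [hPdef, Polynomial.finset_sum_coeff]
    rw [Finset.sum_eq_single j]
    · rw [Polynomial.coeff_monomial, if_pos rfl]
    · intro i _ hij
      rw [Polynomial.coeff_monomial, if_neg (by simpa [Fin.val_eq_val] using hij)]
    · intro habs
      exact absurd (Finset.mem_univ j) habs
  have hcoeff0 : ∀ j : ℕ, n < j → P.coeff j = 0 := by
    intro j hj
    rw [hPdef, Polynomial.finset_sum_coeff]
    apply Finset.sum_eq_zero
    intro i _
    rw [Polynomial.coeff_monomial, if_neg (by have := i.isLt; omega)]
  have hcb : ∀ j : ℕ, |P.coeff j| ≤ (N : ℤ) := by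
    intro j
    by_cases hj : j < n + 1
    · rw [show j = ((⟨j, hj⟩ : Fin (n+1)) : ℕ) from rfl, hcoeff ⟨j, hj⟩]
      rw [abs_sub_le_iff]
      constructor
      · have h1 : ((a ⟨j, hj⟩ : ℕ) : ℤ) ≤ N := by exact_mod_cast Fin.is_le _
        have h2 : (0:ℤ) ≤ ((b ⟨j, hj⟩ : ℕ) : ℤ) := by positivity
        linarith
      · have h1 : ((b ⟨j, hj⟩ : ℕ) : ℤ) ≤ N := by exact_mod_cast Fin.is_le _
        have h2 : (0:ℤ) ≤ ((a ⟨j, hj⟩ : ℕ) : ℤ) := by positivity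
        linarith
    · rw [hcoeff0 j (by omega)]
      simp
  have hPne : P ≠ 0 := by
    obtain ⟨i, hi⟩ := Function.ne_iff.mp hab
    intro hP0
    apply hi
    have : P.coeff (i:ℕ) = 0 := by rw [hP0]; simp
    rw [hcoeff i] at this
    have : ((a i : ℕ) : ℤ) = ((b i : ℕ) : ℤ) := by linarith [sub_eq_zero.mp this]
    have : (a i : ℕ) = (b i : ℕ) := by exact_mod_cast this
    exact Fin.ext this
  have hPdeg : P.natDegree ≤ n := by
    rw [hPdef]
    apply Polynomial.natDegree_sum_le_of_forall_le
    intro i _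
    exact (Polynomial.natDegree_monomial_le _).trans (Nat.lt_succ_iff.mp i.isLt)
  have heval : ∀ x : ℝ, Polynomial.eval x (P.map (Int.castRingHom ℝ)) = S a x - S b x := by
    intro x
    rw [hPdef, Polynomial.map_sum, Polynomial.eval_finset_sum]
    rw [hSdef, ← Finset.sum_sub_distrib]
    apply Finset.sum_congr rfl
    intro i _
    rw [Polynomial.map_monomial, Polynomial.eval_monomial]
    simp only [map_sub, eq_intCast, Int.cast_natCast]
    push_cast
    ring
  have hdiff : ∀ (x : ℝ) (δ : ℝ), 0 < δ →
      ⌊(S a x + Cc * Q) / δ⌋ = ⌊(S b x + Cc * Q) / δ⌋ → |S a x - S b x| < δ := by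
    intro x δ hδ hfe
    have := floor_box hδ hfe
    have e : S a x + Cc * Q - (S b x + Cc * Q) = S a x - S b x := by ring
    rwa [e] at this
  have hfab1 : ⌊(S a x₁ + Cc * Q) / δ₁⌋ = ⌊(S b x₁ + Cc * Q) / δ₁⌋ :=
    congrArg Prod.fst hfab
  have hfab2 : ⌊(S a x₂ + Cc * Q) / δ₂⌋ = ⌊(S b x₂ + Cc * Q) / δ₂⌋ :=
    congrArg Prod.snd hfab
  refine ⟨P, hPne, hPdeg, ?_, ?_, ?_⟩
  · intro i
    have := hcb i
    have : (|P.coeff i| : ℝ) ≤ (N : ℝ) := by exact_mod_cast this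
    linarith
  · rw [heval x₁]
    exact (hdiff x₁ δ₁ hδ₁0 hfab1).le
  · rw [heval x₂]
    exact (hdiff x₂ δ₂ hδ₂0 hfab2).le
end
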